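/- arXiv:math/0703127 — 2 statements merged into one kernel-verified Lean document; each statement's English description precedes it below -/
import Mathlib

section
/- Let f be a transcendental entire function in the class Δ with constants ε₁, ε₂ ∈ (0,1), and let c > 0 satisfy ε₁ > cε₁ + ε₁² (equivalently c + ε₁ < 1). Then there exists r₀ > 1 such that for every r ≥ r₀ there is some s ∈ (r, r^{1+ε₁/c}) with m(s,f) ≥ M(r,f)^{ε₂/2}. -/
/-!
Put `a = 1 + ε₁ / c`. If the conclusion failed at some large `r`, then every `s ∈ (r, r^a)` would
satisfy `log m(s) < (ε₂/2) log M(r) ≤ ε₂ log M(s)` (as `1 ≤ M(r) ≤ M(s)`), so the whole interval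
`(r, r^a)` would lie in `E(f)`. Its logarithmic measure `(a - 1) log r` is the fraction
`(a - 1)/a = ε₁/(c + ε₁) > ε₁` of `log r^a`, contradicting the density bound once `r` is large.
-/

open Filter MeasureTheory

/-- The maximum modulus `M(r,f) = max_{|z|=r} |f z|`. -/
noncomputable def maxMod (f : ℂ → ℂ) (r : ℝ) : ℝ :=
  sSup ((fun z => ‖f z‖) '' Metric.sphere (0 : ℂ) r)

/-- The minimum modulus `m(r,f) = min_{|z|=r} |f z|`. -/
noncomputable def minMod (f : ℂ → ℂ) (r : ℝ) : ℝ :=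
  sInf ((fun z => ‖f z‖) '' Metric.sphere (0 : ℂ) r)

/-- The upper logarithmic density of a set `E ⊆ (1,∞)`:
`limsup_{R→∞} (1/log R) ∫_{E∩(1,R)} dt/t`. -/
noncomputable def upperLogDens (E : Set ℝ) : ℝ :=
  Filter.limsup (fun R : ℝ => (Real.log R)⁻¹ * ∫ t in E ∩ Set.Ioo 1 R, t⁻¹) Filter.atTop

/-- `f` is a transcendental entire function: entire and not a polynomial. -/
def TranscendentalEntire (f : ℂ → ℂ) : Prop :=
  Differentiable ℂ f ∧ ¬ ∃ p : Polynomial ℂ, ∀ z, f z = p.eval z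

/-- The order `λ(f) = limsup_{r→∞} log log M(r,f) / log r`, as an extended real. -/
noncomputable def eOrder (f : ℂ → ℂ) : EReal :=
  Filter.limsup
    (fun r : ℝ => ((Real.log (Real.log (maxMod f r)) / Real.log r : ℝ) : EReal))
    Filter.atTop

/-- The lower order `ρ(f) = liminf_{r→∞} log log M(r,f) / log r`, as an extended real. -/
noncomputable def eLowerOrder (f : ℂ → ℂ) : EReal :=
  Filter.liminf
    (fun r : ℝ => ((Real.log (Real.log (maxMod f r)) / Real.log r : ℝ) : EReal))
    Filter.atTop

open Set

section MaximumModulus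

variable {f : ℂ → ℂ}

lemma norm_le_maxMod (hf : Differentiable ℂ f) {s : ℝ} (hs : 0 < s) {z : ℂ} (hz : ‖z‖ ≤ s) :
    ‖f z‖ ≤ maxMod f s := by
  have hbdd : BddAbove ((fun z => ‖f z‖) '' Metric.sphere (0 : ℂ) s) :=
    ((isCompact_sphere 0 s).image (continuous_norm.comp hf.continuous)).bddAbove
  refine Complex.norm_le_of_forall_mem_frontier_norm_le (Metric.isBounded_ball (x := 0) (r := s))
    hf.diffContOnCl (fun w hw => le_csSup hbdd ⟨w, ?_, rfl⟩) (z := z) ?_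
  · rwa [frontier_ball _ hs.ne'] at hw
  · rwa [closure_ball _ hs.ne', Metric.mem_closedBall, dist_zero_right]

lemma maxMod_mono (hf : Differentiable ℂ f) {r s : ℝ} (hr : 0 ≤ r) (hrs : r ≤ s) :
    maxMod f r ≤ maxMod f s := by
  rcases hrs.eq_or_lt with rfl | hlt
  · exact le_rfl
  refine csSup_le ((NormedSpace.sphere_nonempty.2 hr).image _) ?_
  rintro _ ⟨w, hw, rfl⟩
  exact norm_le_maxMod hf (hr.trans_lt hlt) ((mem_sphere_zero_iff_norm.1 hw).trans_le hrs)

lemma minMod_nonneg (f : ℂ → ℂ) (s : ℝ) : 0 ≤ minMod f s :=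
  Real.sInf_nonneg (by rintro _ ⟨w, -, rfl⟩; exact norm_nonneg _)

lemma eventually_le_maxMod (hf : Differentiable ℂ f) (hconst : ∀ w, f ≠ fun _ => w) (B : ℝ) :
    ∀ᶠ r in atTop, B ≤ maxMod f r := by
  rw [eventually_atTop]
  by_contra! hsmall
  have hbdd : ∀ z, ‖f z‖ ≤ B := fun z => by
    obtain ⟨r, hr, hlt⟩ := hsmall (max ‖z‖ 1)
    exact (norm_le_maxMod hf (one_pos.trans_le ((le_max_right _ _).trans hr))
      ((le_max_left _ _).trans hr)).trans hlt.le
  refine hconst (f 0) (funext fun z => hf.apply_eq_apply_of_bounded ?_ z 0)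
  exact isBounded_iff_forall_norm_le.2 ⟨B, by rintro _ ⟨z, rfl⟩; exact hbdd z⟩

lemma TranscendentalEntire.eventually_one_le_maxMod (hf : TranscendentalEntire f) :
    ∀ᶠ r in atTop, 1 ≤ maxMod f r :=
  eventually_le_maxMod hf.1 (fun w hw => hf.2 ⟨Polynomial.C w, by simp [hw]⟩) 1

lemma log_minMod_le_of_lt_maxMod_rpow (hf : Differentiable ℂ f) {ε r s : ℝ} (hε : 0 ≤ ε)
    (hr : 0 ≤ r) (hrs : r ≤ s) (hM : 1 ≤ maxMod f r)
    (hm : minMod f s < maxMod f r ^ (ε / 2)) :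
    Real.log (minMod f s) ≤ ε * Real.log (maxMod f s) := by
  have hlogM : 0 ≤ Real.log (maxMod f r) := Real.log_nonneg hM
  calc Real.log (minMod f s) ≤ ε / 2 * Real.log (maxMod f r) := ?_
    _ ≤ ε * Real.log (maxMod f r) := by nlinarith
    _ ≤ ε * Real.log (maxMod f s) :=
      mul_le_mul_of_nonneg_left (Real.log_le_log (by linarith) (maxMod_mono hf hr hrs)) hε
  rcases (minMod_nonneg f s).eq_or_lt with h0 | hpos
  · rw [← h0, Real.log_zero]
    positivity
  · calc Real.log (minMod f s) ≤ Real.log (maxMod f r ^ (ε / 2)) := Real.log_le_log hpos hm.le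
      _ = ε / 2 * Real.log (maxMod f r) := Real.log_rpow (by linarith) _

end MaximumModulus

section LogarithmicMeasure

lemma integral_inv_Ioo {x y : ℝ} (hx : 0 < x) (hxy : x ≤ y) :
    ∫ t in Ioo x y, t⁻¹ = Real.log y - Real.log x := by
  rw [← integral_Ioc_eq_integral_Ioo, ← intervalIntegral.integral_of_le hxy,
    integral_inv_of_pos hx (hx.trans_le hxy), Real.log_div (hx.trans_le hxy).ne' hx.ne']

lemma setIntegral_inv_mono {S T : Set ℝ} {a b : ℝ} (ha : 0 < a) (hST : S ⊆ T)
    (hT : T ⊆ Icc a b) : ∫ t in S, t⁻¹ ≤ ∫ t in T, t⁻¹ := by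
  have hint : IntegrableOn (fun t : ℝ => t⁻¹) (Icc a b) :=
    (continuousOn_id.inv₀ fun t ht => (ha.trans_le ht.1).ne').integrableOn_Icc
  refine setIntegral_mono_set (hint.mono_set hT) ?_ (Eventually.of_forall hST)
  refine ae_restrict_of_ae_restrict_of_subset hT (ae_restrict_of_forall_mem measurableSet_Icc ?_)
  exact fun t ht => inv_nonneg.2 (ha.le.trans ht.1)

noncomputable def logDensityRatio (E : Set ℝ) (R : ℝ) : ℝ :=
  (Real.log R)⁻¹ * ∫ t in E ∩ Ioo 1 R, t⁻¹

lemma logDensityRatio_le_one (E : Set ℝ) {R : ℝ} (hR : 1 < R) : logDensityRatio E R ≤ 1 := by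
  have hlog : 0 < Real.log R := Real.log_pos hR
  have hint : ∫ t in E ∩ Ioo 1 R, t⁻¹ ≤ Real.log R := by
    calc ∫ t in E ∩ Ioo 1 R, t⁻¹ ≤ ∫ t in Ioo 1 R, t⁻¹ :=
          setIntegral_inv_mono one_pos inter_subset_right Ioo_subset_Icc_self
      _ = Real.log R := by rw [integral_inv_Ioo one_pos hR.le, Real.log_one, sub_zero]
  calc logDensityRatio E R ≤ (Real.log R)⁻¹ * Real.log R := by
        unfold logDensityRatio; gcongr
    _ = 1 := inv_mul_cancel₀ hlog.ne'

lemma eventually_logDensityRatio_lt {E : Set ℝ} {b : ℝ} (hE : upperLogDens E < b) :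
    ∀ᶠ R in atTop, logDensityRatio E R < b :=
  eventually_lt_of_limsup_lt hE
    ⟨1, eventually_map.2 ((eventually_gt_atTop 1).mono fun _ hR => logDensityRatio_le_one E hR)⟩

lemma le_logDensityRatio_of_Ioo_subset {E : Set ℝ} {r a : ℝ} (hr : 1 < r) (ha : 1 ≤ a)
    (hsub : Ioo r (r ^ a) ⊆ E) : (a - 1) / a ≤ logDensityRatio E (r ^ a) := by
  have hr₀ : 0 < r := one_pos.trans hr
  have hlog : 0 < Real.log r := Real.log_pos hr
  have hrR : r ≤ r ^ a := by simpa using Real.rpow_le_rpow_of_exponent_le hr.le ha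
  have hlogR : Real.log (r ^ a) = a * Real.log r := Real.log_rpow hr₀ a
  have hint : (a - 1) * Real.log r ≤ ∫ t in E ∩ Ioo 1 (r ^ a), t⁻¹ := by
    calc (a - 1) * Real.log r = ∫ t in Ioo r (r ^ a), t⁻¹ := by
          rw [integral_inv_Ioo hr₀ hrR, hlogR]; ring
      _ ≤ ∫ t in E ∩ Ioo 1 (r ^ a), t⁻¹ :=
          setIntegral_inv_mono one_pos (subset_inter hsub (Ioo_subset_Ioo_left hr.le))
            (inter_subset_right.trans Ioo_subset_Icc_self)
  calc (a - 1) / a = (a * Real.log r)⁻¹ * ((a - 1) * Real.log r) := by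
        field_simp
    _ ≤ logDensityRatio E (r ^ a) := by
        unfold logDensityRatio
        rw [hlogR]
        gcongr

lemma eventually_not_Ioo_rpow_subset {E : Set ℝ} {a : ℝ} (ha : 1 < a)
    (hE : upperLogDens E < (a - 1) / a) : ∀ᶠ r in atTop, ¬ Ioo r (r ^ a) ⊆ E := by
  filter_upwards [eventually_gt_atTop 1,
    (tendsto_rpow_atTop (zero_lt_one.trans ha)).eventually (eventually_logDensityRatio_lt hE)]
    with r hr hlt hsub
  exact (le_logDensityRatio_of_Ioo_subset hr ha.le hsub).not_gt hlt

end LogarithmicMeasure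

theorem stmt_2 (f : ℂ → ℂ) (hf : TranscendentalEntire f)
    (ε₁ ε₂ : ℝ) (hε₁ : ε₁ ∈ Set.Ioo (0:ℝ) 1) (hε₂ : ε₂ ∈ Set.Ioo (0:ℝ) 1)
    (hdens : upperLogDens
      {r : ℝ | 1 < r ∧ Real.log (minMod f r) ≤ ε₂ * Real.log (maxMod f r)} ≤ ε₁)
    (c : ℝ) (hc : 0 < c) (hcε : ε₁ > c * ε₁ + ε₁ ^ 2) :
    ∃ r₀ > (1:ℝ), ∀ r ≥ r₀, ∃ s ∈ Set.Ioo r (r ^ (1 + ε₁ / c)),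
      minMod f s ≥ maxMod f r ^ (ε₂ / 2) := by
  have ha : 1 < 1 + ε₁ / c := lt_add_of_pos_right 1 (div_pos hε₁.1 hc)
  -- `(a - 1) / a = ε₁ / (c + ε₁)`, and `ε₁ < ε₁ / (c + ε₁)` is exactly `hcε`.
  have hdens_lt : upperLogDens {r : ℝ | 1 < r ∧ Real.log (minMod f r) ≤ ε₂ * Real.log (maxMod f r)}
      < (1 + ε₁ / c - 1) / (1 + ε₁ / c) := by
    refine hdens.trans_lt ?_
    rw [add_sub_cancel_left, lt_div_iff₀ (by linarith)]
    field_simp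
    nlinarith
  obtain ⟨r₀, hr₀⟩ := eventually_atTop.1 ((eventually_not_Ioo_rpow_subset ha hdens_lt).and
    (hf.eventually_one_le_maxMod.and (eventually_gt_atTop 1)))
  refine ⟨max r₀ 2, one_lt_two.trans_le (le_max_right _ _), fun r hr => ?_⟩
  obtain ⟨hnot, hM, hr1⟩ := hr₀ r (le_of_max_le_left hr)
  by_contra! hsmall
  exact hnot fun s hs => ⟨hr1.trans hs.1, log_minMod_le_of_lt_maxMod_rpow hf.1 hε₂.1.le
    (by linarith) hs.1.le hM (hsmall s hs)⟩
end

section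
/- Let (r_n)_{n≥1} be a sequence of positive real numbers such that r_{n+1} ≥ 16 r_n and 4 r_n ≥ 16^{2n} for all n ≥ 1. If G ⊆ ⋃_{n≥1} (r_n/4, 4r_n) is a measurable set, then the upper logarithmic density of G is at most 1/2. -/
open Filter MeasureTheory

/-!
Since `16 ^ (2n) ≤ 4 rₙ`, an interval `(rₙ/4, 4rₙ)` meeting `(1, R)`
forces `16 ^ (2n) < 16 R`, so at most `(log₁₆ R + 1)/2` of them do. Each has logarithmic measure
`∫ dt/t = log 16`, and by subadditivity `∫_{G ∩ (1,R)} dt/t ≤ (log R + log 16)/2`.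
-/

open Real Set Topology

theorem MeasureTheory.setIntegral_union_le {α : Type*} [MeasurableSpace α] {μ : Measure α}
    {f : α → ℝ} {s t : Set α} (hs0 : 0 ≤ᵐ[μ.restrict s] f) (ht0 : 0 ≤ᵐ[μ.restrict t] f)
    (hs : IntegrableOn f s μ) (ht : IntegrableOn f t μ) :
    ∫ x in s ∪ t, f x ∂μ ≤ ∫ x in s, f x ∂μ + ∫ x in t, f x ∂μ := by
  rw [← integral_add_measure hs ht]
  exact integral_mono_measure (Measure.restrict_union_le s t)
    (ae_add_measure_iff.2 ⟨hs0, ht0⟩) (Integrable.add_measure hs ht)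

theorem MeasureTheory.setIntegral_biUnion_finset_le {ι α : Type*} [MeasurableSpace α]
    {μ : Measure α} {f : α → ℝ} (I : Finset ι) (t : ι → Set α)
    (h0 : ∀ i ∈ I, 0 ≤ᵐ[μ.restrict (t i)] f) (hf : ∀ i ∈ I, IntegrableOn f (t i) μ) :
    ∫ x in ⋃ i ∈ I, t i, f x ∂μ ≤ ∑ i ∈ I, ∫ x in t i, f x ∂μ := by
  classical
  induction I using Finset.induction_on with
  | empty => simp
  | insert a I ha ih =>
    simp only [Finset.mem_insert, forall_eq_or_imp] at h0 hf
    rw [Finset.set_biUnion_insert, Finset.sum_insert ha]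
    refine (setIntegral_union_le h0.1 ?_ hf.1 (integrableOn_finset_iUnion.2 hf.2)).trans
      (add_le_add_right (ih h0.2 hf.2) _)
    exact (ae_restrict_biUnion_finset_iff _ _ _).2 h0.2

theorem MeasureTheory.setIntegral_le_sum_of_subset_biUnion {ι α : Type*} [MeasurableSpace α]
    {μ : Measure α} {f : α → ℝ} {s : Set α} {I : Finset ι} {t : ι → Set α}
    (hs : s ⊆ ⋃ i ∈ I, t i) (h0 : ∀ i ∈ I, 0 ≤ᵐ[μ.restrict (t i)] f)
    (hf : ∀ i ∈ I, IntegrableOn f (t i) μ) :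
    ∫ x in s, f x ∂μ ≤ ∑ i ∈ I, ∫ x in t i, f x ∂μ :=
  (setIntegral_mono_set (integrableOn_finset_iUnion.2 hf)
    ((ae_restrict_biUnion_finset_iff _ _ _).2 h0) hs.eventuallyLE).trans
    (setIntegral_biUnion_finset_le I t h0 hf)

theorem integral_Ioo_inv {a b : ℝ} (ha : 0 < a) (hab : a ≤ b) :
    ∫ t in Ioo a b, t⁻¹ = log (b / a) := by
  rw [← integral_Ioc_eq_integral_Ioo, ← intervalIntegral.integral_of_le hab,
    integral_inv_of_pos ha (ha.trans_le hab)]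

theorem integrableOn_Ioo_inv {a b : ℝ} (ha : 0 < a) : IntegrableOn (fun t : ℝ ↦ t⁻¹) (Ioo a b) :=
  (continuousOn_inv₀.mono fun _ hx ↦ (ha.trans_le hx.1).ne').integrableOn_Icc.mono_set
    Ioo_subset_Icc_self

theorem ae_restrict_Ioo_inv_nonneg {a b : ℝ} (ha : 0 ≤ a) :
    0 ≤ᵐ[volume.restrict (Ioo a b)] fun t ↦ t⁻¹ :=
  ae_restrict_of_forall_mem measurableSet_Ioo fun _ ht ↦ inv_nonneg.2 (ha.trans ht.1.le)

theorem integral_Ioo_div_four_four_mul_inv {ρ : ℝ} (hρ : 0 < ρ) :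
    ∫ t in Ioo (ρ / 4) (4 * ρ), t⁻¹ = log 16 := by
  rw [integral_Ioo_inv (by positivity) (by linarith)]
  congr 1
  field_simp
  norm_num

theorem le_floor_logb_of_pow_lt {b R : ℝ} {n : ℕ} (hb : 1 < b) (h : b ^ (2 * n) < b * R) :
    n ≤ ⌊(logb b R + 1) / 2⌋₊ := by
  have hb0 : 0 < b := zero_lt_one.trans hb
  have hR : 0 < R := pos_of_mul_pos_right ((pow_pos hb0 _).trans h) hb0.le
  have := logb_lt_logb hb (pow_pos hb0 _) h
  rw [logb_pow, logb_mul hb0.ne' hR.ne', logb_self_eq_one hb] at this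
  apply Nat.le_floor
  push_cast at this ⊢
  linarith

theorem Filter.limsup_le_of_eventually_le_of_tendsto {ι : Type*} {l : Filter ι} [l.NeBot]
    {f g : ι → ℝ} {a c : ℝ} (hf : ∀ᶠ x in l, a ≤ f x) (hfg : f ≤ᶠ[l] g) (hg : Tendsto g l (𝓝 c)) :
    limsup f l ≤ c :=
  (limsup_le_limsup hfg (isCoboundedUnder_le_of_eventually_le l hf) hg.isBoundedUnder_le).trans_eq
    hg.limsup_eq

section

variable {r : ℕ → ℝ} {G : Set ℝ}

theorem inter_Ioo_subset_biUnion_Icc (hbig : ∀ n ≥ 1, (16:ℝ) ^ (2 * n) ≤ 4 * r n)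
    (hG : G ⊆ ⋃ n ∈ Set.Ici 1, Set.Ioo (r n / 4) (4 * r n)) (R : ℝ) :
    G ∩ Ioo 1 R ⊆ ⋃ n ∈ Finset.Icc 1 ⌊(logb 16 R + 1) / 2⌋₊, Ioo (r n / 4) (4 * r n) := by
  rintro x ⟨hxG, -, hxR⟩
  obtain ⟨n, hn : 1 ≤ n, hx⟩ := mem_iUnion₂.1 (hG hxG)
  refine mem_biUnion (Finset.mem_Icc.2 ⟨hn, le_floor_logb_of_pow_lt (by norm_num) ?_⟩) hx
  linarith [hbig n hn, hx.1]

theorem setIntegral_inter_Ioo_inv_le (hpos : ∀ n ≥ 1, 0 < r n)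
    (hbig : ∀ n ≥ 1, (16:ℝ) ^ (2 * n) ≤ 4 * r n)
    (hG : G ⊆ ⋃ n ∈ Set.Ici 1, Set.Ioo (r n / 4) (4 * r n)) {R : ℝ} (hR : 1 ≤ R) :
    ∫ t in G ∩ Ioo 1 R, t⁻¹ ≤ (log R + log 16) / 2 := by
  set N := ⌊(logb 16 R + 1) / 2⌋₊
  have hpos' : ∀ n ∈ Finset.Icc 1 N, 0 < r n := fun n hn ↦ hpos n (Finset.mem_Icc.1 hn).1
  have hN : (N : ℝ) ≤ (logb 16 R + 1) / 2 :=
    Nat.floor_le (by linarith [logb_nonneg (by norm_num : (1:ℝ) < 16) hR])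
  calc ∫ t in G ∩ Ioo 1 R, t⁻¹
      ≤ ∑ n ∈ Finset.Icc 1 N, ∫ t in Ioo (r n / 4) (4 * r n), t⁻¹ :=
        setIntegral_le_sum_of_subset_biUnion (inter_Ioo_subset_biUnion_Icc hbig hG R)
          (fun n hn ↦ ae_restrict_Ioo_inv_nonneg (by linarith [hpos' n hn]))
          (fun n hn ↦ integrableOn_Ioo_inv (by linarith [hpos' n hn]))
    _ = N * log 16 := by
        rw [Finset.sum_congr rfl fun n hn ↦ integral_Ioo_div_four_four_mul_inv (hpos' n hn)]
        simp
    _ ≤ (logb 16 R + 1) / 2 * log 16 := by gcongr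
    _ = (log R + log 16) / 2 := by
        rw [logb]
        field_simp

end

theorem stmt_14_general (r : ℕ → ℝ) (hpos : ∀ n ≥ 1, 0 < r n)
    (hbig : ∀ n ≥ 1, (16:ℝ) ^ (2 * n) ≤ 4 * r n)
    (G : Set ℝ)
    (hG : G ⊆ ⋃ n ∈ Set.Ici 1, Set.Ioo (r n / 4) (4 * r n)) :
    upperLogDens G ≤ 1 / 2 := by
  have hlim : Tendsto (fun R ↦ 1 / 2 + log 16 / (2 * log R)) atTop (𝓝 (1 / 2)) := by
    simpa using tendsto_const_nhds.add
      (tendsto_const_nhds.div_atTop (tendsto_log_atTop.const_mul_atTop two_pos))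
  refine limsup_le_of_eventually_le_of_tendsto (a := 0) ?_ ?_ hlim
  · filter_upwards [eventually_ge_atTop 1] with R hR
    refine mul_nonneg (inv_nonneg.2 (log_nonneg hR)) (setIntegral_nonneg_of_ae_restrict ?_)
    exact ae_restrict_of_ae_restrict_of_subset inter_subset_right
      (ae_restrict_Ioo_inv_nonneg zero_le_one)
  · filter_upwards [eventually_gt_atTop 1] with R hR
    have hlogR := log_pos hR
    calc (log R)⁻¹ * ∫ t in G ∩ Ioo 1 R, t⁻¹
        ≤ (log R)⁻¹ * ((log R + log 16) / 2) := by
          gcongr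
          exact setIntegral_inter_Ioo_inv_le hpos hbig hG hR.le
      _ = 1 / 2 + log 16 / (2 * log R) := by field_simp

theorem stmt_14 (r : ℕ → ℝ) (hpos : ∀ n ≥ 1, 0 < r n)
    (hgrow : ∀ n ≥ 1, 16 * r n ≤ r (n + 1))
    (hbig : ∀ n ≥ 1, (16:ℝ) ^ (2 * n) ≤ 4 * r n)
    (G : Set ℝ) (hGmeas : MeasurableSet G)
    (hG : G ⊆ ⋃ n ∈ Set.Ici 1, Set.Ioo (r n / 4) (4 * r n)) :
    upperLogDens G ≤ 1 / 2 :=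
  stmt_14_general r hpos hbig G hG
end
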